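/- arXiv:2503.15981 — 3 statements merged into one kernel-verified Lean document; each statement's English description precedes it below -/
import Mathlib

section
/- In the group algebra \u2102[S_3] of the symmetric group on three letters, for all complex numbers u, v with u, v, and u+v nonzero, the Yang R-matrix identity holds: (1 - (1 2)/u)(1 - (1 3)/(u+v))(1 - (2 3)/v) = (1 - (2 3)/v)(1 - (1 3)/(u+v))(1 - (1 2)/u). -/
open MonoidAlgebra

lemma yb_aux {R : Type*} [Ring R] [Module ℂ R] [IsScalarTower ℂ R R] [SMulCommClass ℂ R R]
    (a b c p q r : R) (x y z : ℂ)
    (hab : a * b = p) (hbc : b * c = p) (hca : c * a = p)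
    (hac : a * c = q) (hba : b * a = q) (hcb : c * b = q)
    (hpc : p * c = r) (hqa : q * a = r)
    (hs : x * y + y * z = x * z) :
    (1 - x • a) * (1 - y • b) * (1 - z • c) = (1 - z • c) * (1 - y • b) * (1 - x • a) := by
  simp only [mul_sub, sub_mul, one_mul, mul_one, smul_mul_assoc, mul_smul_comm, smul_smul,
    mul_assoc, hab, hbc, hca, hac, hba, hcb, hpc, hqa]
  match_scalars <;> first | ring1 | linear_combination hs | linear_combination -hs

theorem yang_baxter_S3 (u v : ℂ) (hu : u ≠ 0) (hv : v ≠ 0) (huv : u + v ≠ 0) :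
    ((1 : MonoidAlgebra ℂ (Equiv.Perm (Fin 3))) -
        u⁻¹ • MonoidAlgebra.of ℂ (Equiv.Perm (Fin 3)) (Equiv.swap 0 1)) *
      ((1 : MonoidAlgebra ℂ (Equiv.Perm (Fin 3))) -
        (u + v)⁻¹ • MonoidAlgebra.of ℂ (Equiv.Perm (Fin 3)) (Equiv.swap 0 2)) *
      ((1 : MonoidAlgebra ℂ (Equiv.Perm (Fin 3))) -
        v⁻¹ • MonoidAlgebra.of ℂ (Equiv.Perm (Fin 3)) (Equiv.swap 1 2)) =
    ((1 : MonoidAlgebra ℂ (Equiv.Perm (Fin 3))) -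
        v⁻¹ • MonoidAlgebra.of ℂ (Equiv.Perm (Fin 3)) (Equiv.swap 1 2)) *
      ((1 : MonoidAlgebra ℂ (Equiv.Perm (Fin 3))) -
        (u + v)⁻¹ • MonoidAlgebra.of ℂ (Equiv.Perm (Fin 3)) (Equiv.swap 0 2)) *
      ((1 : MonoidAlgebra ℂ (Equiv.Perm (Fin 3))) -
        u⁻¹ • MonoidAlgebra.of ℂ (Equiv.Perm (Fin 3)) (Equiv.swap 0 1)) := by
  set f := MonoidAlgebra.of ℂ (Equiv.Perm (Fin 3)) with hf
  apply yb_aux (p := f (Equiv.swap 0 1 * Equiv.swap 0 2)) (q := f (Equiv.swap 0 1 * Equiv.swap 1 2))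
    (r := f (Equiv.swap 0 1 * Equiv.swap 0 2 * Equiv.swap 1 2))
  · exact (map_mul f _ _).symm
  · rw [← map_mul]; congr 1; decide
  · rw [← map_mul]; congr 1; decide
  · exact (map_mul f _ _).symm
  · rw [← map_mul]; congr 1; decide
  · rw [← map_mul]; congr 1; decide
  · exact (map_mul f _ _).symm
  · rw [← map_mul]; congr 1; decide
  · field_simp
    ring
end

section
/- In the group algebra \u2102[S_n] (n \u2265 3), for adjacent transpositions s_i = (i, i+1) and s_{i+1} = (i+1, i+2) and pairwise distinct complex numbers a, a', a'', the Baxterized braid relation holds: (s_i + 1/(a-a'))(s_{i+1} + 1/(a-a''))(s_i + 1/(a'-a'')) = (s_{i+1} + 1/(a'-a''))(s_i + 1/(a-a''))(s_{i+1} + 1/(a-a')). -/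
theorem baxter_generic {R : Type*} [Ring R] [Algebra ℂ R] (S T : R)
    (hS : S * S = 1) (hT : T * T = 1) (hB : S * T * S = T * S * T)
    (α β γ : ℂ) (hsc : α * β + β * γ = α * γ) :
    (S + α • 1) * (T + β • 1) * (S + γ • 1) =
    (T + γ • 1) * (S + β • 1) * (T + α • 1) := by
  simp only [mul_add, add_mul, smul_mul_assoc, mul_smul_comm, smul_smul,
    one_mul, mul_one, mul_assoc]
  rw [← mul_assoc S T S, hB, hS, hT, ← mul_assoc T S T]
  match_scalars
  all_goals (first | ring1 | linear_combination hsc | linear_combination -hsc)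

theorem baxterized_braid_relation (n i : ℕ) (hn : 3 ≤ n) (h : i + 2 < n)
    (a a' a'' : ℂ) (h1 : a ≠ a') (h2 : a ≠ a'') (h3 : a' ≠ a'') :
    (MonoidAlgebra.of ℂ (Equiv.Perm (Fin n))
        (Equiv.swap ⟨i, by omega⟩ ⟨i + 1, by omega⟩) + (a - a')⁻¹ • 1) *
      (MonoidAlgebra.of ℂ (Equiv.Perm (Fin n))
        (Equiv.swap ⟨i + 1, by omega⟩ ⟨i + 2, h⟩) + (a - a'')⁻¹ • 1) *
      (MonoidAlgebra.of ℂ (Equiv.Perm (Fin n))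
        (Equiv.swap ⟨i, by omega⟩ ⟨i + 1, by omega⟩) + (a' - a'')⁻¹ • 1) =
    (MonoidAlgebra.of ℂ (Equiv.Perm (Fin n))
        (Equiv.swap ⟨i + 1, by omega⟩ ⟨i + 2, h⟩) + (a' - a'')⁻¹ • 1) *
      (MonoidAlgebra.of ℂ (Equiv.Perm (Fin n))
        (Equiv.swap ⟨i, by omega⟩ ⟨i + 1, by omega⟩) + (a - a'')⁻¹ • 1) *
      (MonoidAlgebra.of ℂ (Equiv.Perm (Fin n))
        (Equiv.swap ⟨i + 1, by omega⟩ ⟨i + 2, h⟩) + (a - a')⁻¹ • 1) := by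
  set x : Fin n := ⟨i, by omega⟩
  set y : Fin n := ⟨i + 1, by omega⟩
  set z : Fin n := ⟨i + 2, h⟩
  have hxy : x ≠ y := by simp [x, y, Fin.ext_iff]
  have hyz : y ≠ z := by simp [y, z, Fin.ext_iff]
  have hxz : x ≠ z := by simp [x, z, Fin.ext_iff]
  have hbraid : Equiv.swap x y * Equiv.swap y z * Equiv.swap x y =
      Equiv.swap y z * Equiv.swap x y * Equiv.swap y z := by
    rw [Equiv.swap_mul_swap_mul_swap hxy hxz]
    rw [Equiv.swap_comm x y, Equiv.swap_comm y z,
      Equiv.swap_mul_swap_mul_swap hyz.symm hxz.symm]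
    exact Equiv.swap_comm x z
  have hsc : (a - a')⁻¹ * (a - a'')⁻¹ + (a - a'')⁻¹ * (a' - a'')⁻¹ =
      (a - a')⁻¹ * (a' - a'')⁻¹ := by
    have d1 : a - a' ≠ 0 := sub_ne_zero.mpr h1
    have d2 : a - a'' ≠ 0 := sub_ne_zero.mpr h2
    have d3 : a' - a'' ≠ 0 := sub_ne_zero.mpr h3
    field_simp
    ring
  exact baxter_generic _ _
    (by rw [← map_mul, Equiv.swap_mul_self, map_one])
    (by rw [← map_mul, Equiv.swap_mul_self, map_one])
    (by rw [← map_mul, ← map_mul, ← map_mul, ← map_mul, hbraid])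
    _ _ _ hsc
end

section
/- For distinct complex numbers c_1, ..., c_k with c_k \u2260 c_j for all j < k, the coefficient at the identity element in \u2102[S_k] of the product (s_{k-1} + a_{k-1})(s_{k-2} + a_{k-2}) \u22ef (s_1 + a_1) s_1 s_2 \u22ef s_{k-1} is equal to 1, for any complex scalars a_1, ..., a_{k-1}. -/
/-- The adjacent transposition `s_i = (i, i+1)` (1-based) in `S_k`. -/
def adjSwap (k i : ℕ) : Equiv.Perm (Fin k) :=
  if h : 0 < i ∧ i < k then Equiv.swap ⟨i - 1, by omega⟩ ⟨i, h.2⟩ else 1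

/-- `(s_{k-1} + a_{k-1}) ⋯ (s_1 + a_1)` in the group algebra `ℂ[S_k]`. -/
noncomputable def leftProd (k : ℕ) (a : ℕ → ℂ) : MonoidAlgebra ℂ (Equiv.Perm (Fin k)) :=
  (((List.range (k - 1)).map (fun m =>
      MonoidAlgebra.of ℂ (Equiv.Perm (Fin k)) (adjSwap k (m + 1)) +
        (a (m + 1)) • 1)).reverse).prod

/-- `s_1 s_2 ⋯ s_{k-1}` in the group algebra `ℂ[S_k]`. -/
noncomputable def rightProd (k : ℕ) : MonoidAlgebra ℂ (Equiv.Perm (Fin k)) :=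
  ((List.range (k - 1)).map (fun m =>
      MonoidAlgebra.of ℂ (Equiv.Perm (Fin k)) (adjSwap k (m + 1)))).prod

/-!
Right multiplication by the group element `s_1 ⋯ s_{k-1}` turns the identity coefficient into
the coefficient of `(s_{k-1} + a_{k-1}) ⋯ (s_1 + a_1)` at `w = s_{k-1} ⋯ s_1`. Expanding that
product, every term is a subword of `w` weighted by the scalars of the omitted letters, and the
only subword evaluating to `w` is `w` itself: the subgroup generated by `s_1, …, s_{n-1}` fixes
the point `n + 1`, so it does not contain `s_n`.
-/

namespace MonoidAlgebra

variable {k G : Type*} [Semiring k]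

section Monoid

variable [Monoid G]

theorem list_prod_mem_supported {S : Submonoid G} (l : List k[G])
    (hl : ∀ x ∈ l, x ∈ supported k k (S : Set G)) : l.prod ∈ supported k k (S : Set G) := by
  classical
  refine List.prod_induction (· ∈ supported k k (S : Set G)) (fun x y hx hy => ?_) ?_ hl
  · rw [mem_supported] at hx hy ⊢
    grw [support_coeff_mul_subset, Finset.coe_mul, Set.mul_subset_mul hx hy,
      Submonoid.coe_mul_self_eq]
  · rw [mem_supported]
    grw [support_coeff_one_subset]
    simp

theorem of_add_smul_one_mem_supported (g : G) (a : k) {S : Submonoid G} (hg : g ∈ S) :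
    of k G g + a • 1 ∈ supported k k (S : Set G) := by
  rw [mem_supported']
  intro h hh
  have h1 : h ≠ 1 := fun e => hh (e ▸ S.one_mem)
  have hg' : h ≠ g := fun e => hh (e ▸ hg)
  simp [coeff_single, Ne.symm hg', one_def, Ne.symm h1]

end Monoid

section Group

variable [Group G]

theorem prod_range_add_smul_one_mem_supported_closure (g : ℕ → G) (a : ℕ → k) (n : ℕ) :
    ((List.range n).map fun m => of k G (g m) + a m • 1).reverse.prod ∈
      supported k k (Subgroup.closure (g '' Set.Iio n) : Set G) := by
  refine list_prod_mem_supported (S := (Subgroup.closure (g '' Set.Iio n)).toSubmonoid) _ ?_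
  simp only [List.mem_reverse, List.mem_map, List.mem_range]
  rintro _ ⟨m, hm, rfl⟩
  exact of_add_smul_one_mem_supported _ _ (Subgroup.subset_closure ⟨m, hm, rfl⟩)

theorem coeff_prod_range_add_smul_one (g : ℕ → G) (a : ℕ → k) (n : ℕ)
    (hg : ∀ m < n, g m ∉ Subgroup.closure (g '' Set.Iio m)) :
    (((List.range n).map fun m => of k G (g m) + a m • 1).reverse.prod).coeff
      ((List.range n).map g).reverse.prod = 1 := by
  induction n with
  | zero => simp [one_def]
  | succ n ih =>
    set P := ((List.range n).map fun m => of k G (g m) + a m • 1).reverse.prod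
    set w := ((List.range n).map g).reverse.prod
    have hw : w ∈ Subgroup.closure (g '' Set.Iio n) :=
      (Subgroup.closure _).list_prod_mem (by
        simp only [List.mem_reverse, List.mem_map, List.mem_range]
        rintro _ ⟨m, hm, rfl⟩
        exact Subgroup.subset_closure ⟨m, hm, rfl⟩)
    have hgw : P.coeff (g n * w) = 0 := by
      refine (mem_supported'.1 (prod_range_add_smul_one_mem_supported_closure g a n)) _ ?_
      intro hmem
      exact hg n n.lt_succ_self (by simpa using Subgroup.mul_mem _ hmem (Subgroup.inv_mem _ hw))
    simp only [List.range_succ, List.map_append, List.reverse_append, List.prod_append,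
      List.map_singleton, List.reverse_singleton, List.prod_singleton]
    rw [add_mul, coeff_add, Finsupp.add_apply, smul_mul_assoc, one_mul, coeff_smul_apply,
      of_apply, coeff_single_mul_apply, inv_mul_cancel_left, one_mul, hgw,
      ih fun m hm => hg m (by omega)]
    simp

end Group

end MonoidAlgebra

theorem adjSwap_inv (k i : ℕ) : (adjSwap k i)⁻¹ = adjSwap k i := by
  unfold adjSwap
  split_ifs
  exacts [Equiv.swap_inv _ _, inv_one]

theorem adjSwap_apply_of_lt {k i : ℕ} {x : Fin k} (h : i < x) : adjSwap k i x = x := by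
  unfold adjSwap
  split_ifs
  · exact Equiv.swap_apply_of_ne_of_ne (Fin.ne_of_gt (show i - 1 < (x : ℕ) by omega))
      (Fin.ne_of_gt h)
  · rfl

theorem adjSwap_apply_self {k i : ℕ} (hi : 0 < i) (hik : i < k) :
    adjSwap k i ⟨i, hik⟩ = ⟨i - 1, by omega⟩ := by
  rw [adjSwap, dif_pos ⟨hi, hik⟩, Equiv.swap_apply_right]

theorem adjSwap_succ_notMem_closure {k m : ℕ} (hm : m + 1 < k) :
    adjSwap k (m + 1) ∉ Subgroup.closure ((fun j => adjSwap k (j + 1)) '' Set.Iio m) := by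
  intro h
  have hfix : Subgroup.closure ((fun j => adjSwap k (j + 1)) '' Set.Iio m) ≤
      MulAction.stabilizer (Equiv.Perm (Fin k)) (⟨m + 1, hm⟩ : Fin k) := by
    rw [Subgroup.closure_le]
    rintro _ ⟨j, hj, rfl⟩
    exact adjSwap_apply_of_lt (show j + 1 < m + 1 by simpa using hj)
  have hfixed : adjSwap k (m + 1) ⟨m + 1, hm⟩ = ⟨m + 1, hm⟩ := hfix h
  rw [adjSwap_apply_self m.succ_pos hm, Fin.mk.injEq] at hfixed
  omega

theorem coeff_one_of_phi_general (k : ℕ) (a : ℕ → ℂ) :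
    (leftProd k a * rightProd k).coeff (1 : Equiv.Perm (Fin k)) = 1 := by
  have hright : rightProd k =
      MonoidAlgebra.of ℂ _ ((List.range (k - 1)).map fun m => adjSwap k (m + 1)).prod := by
    rw [rightProd, map_list_prod, List.map_map]
    rfl
  rw [hright, MonoidAlgebra.of_apply, MonoidAlgebra.coeff_mul_single_apply, one_mul, mul_one,
    List.prod_inv_reverse, List.map_map]
  simp only [Function.comp_def, adjSwap_inv]
  exact MonoidAlgebra.coeff_prod_range_add_smul_one _ (fun m => a (m + 1)) (k - 1)
    fun m hm => adjSwap_succ_notMem_closure (by omega)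

/-- The coefficient at the identity of
`(s_{k-1} + a_{k-1}) ⋯ (s_1 + a_1) s_1 s_2 ⋯ s_{k-1}` is `1`. -/
theorem coeff_one_of_phi (k : ℕ) (c : ℕ → ℂ)
    (hc : ∀ j, 1 ≤ j → j < k → c k ≠ c j) (a : ℕ → ℂ) :
    (leftProd k a * rightProd k).coeff (1 : Equiv.Perm (Fin k)) = 1 :=
  coeff_one_of_phi_general k a
end
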